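/- arXiv:2503.18169 — 7 statements merged into one kernel-verified Lean document; each statement's English description precedes it below -/
import Mathlib

section
/- Let X be a pointed metric space containing a sequence (x_n) of pairwise distinct points in X \ {0} converging to some x ∈ X \ {0}. Then there is no f ∈ Lip_0(X) such that f(x_n)/d(x_n,0) = (−1)^n for all n ∈ ℕ; consequently, the sequence ((x_n, 0)) is not Lipschitz interpolating for Lip_0(X). -/
open Filter Topology

/-! The ratio `f (x n) / d(x n, z)` of a Lipschitz function is continuous in `x n` away from the
base point, so along `x n → w ≠ z` it converges to `f w / d(w, z)`; the sequence `(-1)ⁿ` does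
not converge. -/

theorem not_tendsto_neg_one_pow (a : ℝ) :
    ¬ Tendsto (fun n : ℕ => (-1 : ℝ) ^ n) atTop (𝓝 a) := by
  intro h
  have h_neg : a = -a := by
    refine tendsto_nhds_unique ((tendsto_add_atTop_iff_nat 1).2 h) ?_
    simpa only [pow_succ, mul_neg_one] using h.neg
  have h_abs : |a| = 1 := by
    refine tendsto_nhds_unique h.abs ?_
    simpa only [abs_pow, abs_neg, abs_one, one_pow] using tendsto_const_nhds
  have ha : a = 0 := by linarith
  simp [ha] at h_abs

theorem continuous_of_abs_sub_le_mul_dist {X : Type*} [PseudoMetricSpace X] {f : X → ℝ}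
    {K : ℝ} (hf : ∀ a b, |f a - f b| ≤ K * dist a b) : Continuous f :=
  (LipschitzWith.of_dist_le' fun a b => (Real.dist_eq (f a) (f b)).symm ▸ hf a b).continuous

theorem Filter.Tendsto.div_dist {ι X : Type*} [PseudoMetricSpace X] {l : Filter ι}
    {x : ι → X} {w : X} (hlim : Tendsto x l (𝓝 w)) {f : X → ℝ} (hf : Continuous f) {z : X}
    (hw : dist w z ≠ 0) :
    Tendsto (fun n => f (x n) / dist (x n) z) l (𝓝 (f w / dist w z)) :=
  ((hf.tendsto w).comp hlim).div (hlim.dist tendsto_const_nhds) hw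

theorem stmt5_general {X : Type*} [MetricSpace X] (z : X) (x : ℕ → X) (w : X)
    (hw : w ≠ z)
    (hlim : Filter.Tendsto x Filter.atTop (nhds w)) :
    (¬ ∃ f : X → ℝ, f z = 0 ∧ (∃ K : ℝ, ∀ a b : X, |f a - f b| ≤ K * dist a b) ∧
        ∀ n, f (x n) / dist (x n) z = (-1 : ℝ) ^ n) ∧
    ¬ (∀ α : ℕ → ℝ, (∃ C, ∀ n, |α n| ≤ C) →
        ∃ f : X → ℝ, f z = 0 ∧ (∃ K : ℝ, ∀ a b : X, |f a - f b| ≤ K * dist a b) ∧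
          ∀ n, (f (x n) - f z) / dist (x n) z = α n) := by
  have no_alternating : ¬ ∃ f : X → ℝ, f z = 0 ∧
      (∃ K : ℝ, ∀ a b : X, |f a - f b| ≤ K * dist a b) ∧
      ∀ n, f (x n) / dist (x n) z = (-1 : ℝ) ^ n := by
    rintro ⟨f, -, ⟨K, hK⟩, hf⟩
    have h := hlim.div_dist (continuous_of_abs_sub_le_mul_dist hK) (dist_ne_zero.2 hw)
    simp only [hf] at h
    exact not_tendsto_neg_one_pow _ h
  refine ⟨no_alternating, fun hinterp => no_alternating ?_⟩
  obtain ⟨f, hfz, hK, hf⟩ := hinterp (fun n => (-1 : ℝ) ^ n) ⟨1, fun n => by simp⟩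
  exact ⟨f, hfz, hK, fun n => by simpa only [hfz, sub_zero] using hf n⟩

/-- Let `X` be a pointed metric space with base point `z` containing a
sequence `(x n)` of pairwise distinct points of `X \ {z}` converging to some `w ≠ z`.
Then no Lipschitz function `f` with `f z = 0` satisfies `f (x n) / d(x n, z) = (−1)ⁿ`
for all `n`; consequently the sequence `((x n, z))` is not Lipschitz interpolating for
`Lip₀(X)`. -/
theorem stmt5 {X : Type*} [MetricSpace X] (z : X) (x : ℕ → X) (w : X)
    (hinj : Function.Injective x) (hne : ∀ n, x n ≠ z) (hw : w ≠ z)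
    (hlim : Filter.Tendsto x Filter.atTop (nhds w)) :
    (¬ ∃ f : X → ℝ, f z = 0 ∧ (∃ K : ℝ, ∀ a b : X, |f a - f b| ≤ K * dist a b) ∧
        ∀ n, f (x n) / dist (x n) z = (-1 : ℝ) ^ n) ∧
    ¬ (∀ α : ℕ → ℝ, (∃ C, ∀ n, |α n| ≤ C) →
        ∃ f : X → ℝ, f z = 0 ∧ (∃ K : ℝ, ∀ a b : X, |f a - f b| ≤ K * dist a b) ∧
          ∀ n, (f (x n) - f z) / dist (x n) z = α n) :=
  stmt5_general z x w hw hlim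
end

section
/- Let X be a pointed metric space and ((x_i,y_i))_{i∈I} ⊆ X², x_i ≠ y_i, satisfying: (1) there exist r_i > 0 with the open balls B(x_i, r_i) pairwise disjoint; (2) (r_i + r_j)/d(B(x_i,r_i), B(x_j,r_j)) < 1/2 for all i ≠ j; (3) 0 < d(x_i, y_i) < d(y_i, X \ B(x_i, r_i)) for all i. Then ((x_i,y_i))_{i∈I} is a Lipschitz interpolating set for Lip_0(X) with Lipschitz interpolation constant 1; moreover, for every α ∈ ℓ_∞(I) there is f ∈ Lip_0(X) with ‖f‖ = ‖α‖_∞ solving the interpolation problem. -/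
private lemma key_interp {X : Type*} [MetricSpace X] {I : Type*} (z : X) (x y : I → X)
    (r : I → ℝ) (hr : ∀ i, 0 < r i)
    (hdisj : ∀ i j, i ≠ j →
      Disjoint (Metric.ball (x i) (r i)) (Metric.ball (x j) (r j)))
    (hin : ∀ i, 0 < dist (x i) (y i) ∧
      dist (x i) (y i) < Metric.infDist (y i) (Metric.ball (x i) (r i))ᶜ)
    (α : I → ℝ) (C : ℝ) (hC : 0 ≤ C) (hα : ∀ i, |α i| ≤ C) :
    ∃ f : X → ℝ, f z = 0 ∧ (∀ a b : X, |f a - f b| ≤ C * dist a b) ∧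
      ∀ i, (f (x i) - f (y i)) / dist (x i) (y i) = α i := by
  classical
  have hρpos : ∀ i, 0 < dist (x i) (y i) := fun i => (hin i).1
  set φ : I → X → ℝ := fun i p =>
    if 0 ≤ α i then max 0 (dist (x i) (y i) - dist p (x i))
    else max 0 (dist (x i) (y i) - dist p (y i)) with hφdef
  have hφnn : ∀ i p, 0 ≤ φ i p := by
    intro i p; simp only [hφdef]; split <;> exact le_max_left _ _
  have hmem : ∀ i p, dist (y i) p < Metric.infDist (y i) (Metric.ball (x i) (r i))ᶜ →
      p ∈ Metric.ball (x i) (r i) := by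
    intro i p hp
    by_contra h
    exact absurd hp (not_lt.2 (Metric.infDist_le_dist_of_mem h))
  have hyB : ∀ i, y i ∈ Metric.ball (x i) (r i) := by
    intro i
    exact hmem i (y i) (by simpa using lt_trans (hin i).1 (hin i).2)
  have hρr : ∀ i, dist (x i) (y i) < r i := by
    intro i
    have := hyB i
    rw [Metric.mem_ball, dist_comm] at this
    exact this
  have hmax : ∀ u : ℝ, 0 < max 0 u → 0 < u := by
    intro u h
    rcases lt_max_iff.1 h with h' | h'
    · exact absurd h' (lt_irrefl 0)
    · exact h'
  have hsupp : ∀ i p, 0 < φ i p → p ∈ Metric.ball (x i) (r i) := by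
    intro i p h
    simp only [hφdef] at h
    split at h
    · rw [Metric.mem_ball]
      have := hmax _ h
      linarith [hρr i]
    · have := hmax _ h
      exact hmem i p (by rw [dist_comm]; linarith [(hin i).2])
  have haux : ∀ (c p q : X) (t : ℝ),
      max 0 (t - dist p c) - max 0 (t - dist q c) ≤ dist p q := by
    intro c p q t
    have h1 : dist q c ≤ dist q p + dist p c := dist_triangle _ _ _
    have h2 := le_max_right (0:ℝ) (t - dist q c)
    have h3 := le_max_left (0:ℝ) (t - dist q c)
    have h4 : dist q p = dist p q := dist_comm _ _
    have h5 : (0:ℝ) ≤ dist p q := dist_nonneg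
    have h6 : max 0 (t - dist p c) ≤ max 0 (t - dist q c) + dist p q :=
      max_le (by linarith) (by linarith)
    linarith
  have hlip : ∀ i (p q : X), φ i p - φ i q ≤ dist p q := by
    intro i p q
    simp only [hφdef]
    split <;> exact haux _ _ _ _
  have hout : ∀ i (p q : X), q ∉ Metric.ball (x i) (r i) → φ i p ≤ dist p q := by
    intro i p q hq
    have hq' : r i ≤ dist q (x i) := by
      rw [Metric.mem_ball, not_lt] at hq; exact hq
    simp only [hφdef]
    split
    · apply max_le dist_nonneg
      have h1 : dist q (x i) ≤ dist q p + dist p (x i) := dist_triangle _ _ _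
      have h2 : dist q p = dist p q := dist_comm _ _
      linarith [hρr i]
    · apply max_le dist_nonneg
      have h1 : Metric.infDist (y i) (Metric.ball (x i) (r i))ᶜ ≤ dist (y i) q :=
        Metric.infDist_le_dist_of_mem hq
      have h2 : dist (y i) q ≤ dist (y i) p + dist p q := dist_triangle _ _ _
      have h3 : dist (y i) p = dist p (y i) := dist_comm _ _
      linarith [(hin i).2]
  set g : X → ℝ := fun p =>
    if h : ∃ j, 0 < φ j p then |α h.choose| * φ h.choose p else 0 with hgdef
  have huniq : ∀ {i j : I} {p : X}, 0 < φ i p → 0 < φ j p → i = j := by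
    intro i j p hi hj
    by_contra hne
    exact Set.disjoint_left.1 (hdisj i j hne) (hsupp i p hi) (hsupp j p hj)
  have hg_pos : ∀ i (p : X), 0 < φ i p → g p = |α i| * φ i p := by
    intro i p hi
    have hex : ∃ j, 0 < φ j p := ⟨i, hi⟩
    have he : hex.choose = i := huniq hex.choose_spec hi
    simp only [hgdef]
    rw [dif_pos hex, he]
  have hg_zero : ∀ p : X, (∀ j, ¬ 0 < φ j p) → g p = 0 := by
    intro p h
    simp only [hgdef]
    rw [dif_neg (by simpa using h)]
  have hgat : ∀ i (p : X), p ∈ Metric.ball (x i) (r i) → g p = |α i| * φ i p := by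
    intro i p hp
    by_cases h : 0 < φ i p
    · exact hg_pos i p h
    · have hz : ∀ j, ¬ 0 < φ j p := by
        intro j hj
        by_cases hij : j = i
        · exact h (hij ▸ hj)
        · exact Set.disjoint_left.1 (hdisj j i hij) (hsupp j p hj) hp
      rw [hg_zero p hz]
      have h0 : φ i p = 0 := le_antisymm (not_lt.1 h) (hφnn i p)
      rw [h0, mul_zero]
  have hgd : ∀ a b : X, g a - g b ≤ C * dist a b := by
    intro a b
    have hCd : 0 ≤ C * dist a b := mul_nonneg hC dist_nonneg
    by_cases ha : ∃ i, 0 < φ i a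
    · obtain ⟨i, hi⟩ := ha
      rw [hg_pos i a hi]
      have hbound : ∀ h1 : φ i a ≤ dist a b, |α i| * φ i a ≤ C * dist a b := by
        intro h1
        calc |α i| * φ i a ≤ C * φ i a := mul_le_mul_of_nonneg_right (hα i) (hφnn i a)
          _ ≤ C * dist a b := mul_le_mul_of_nonneg_left h1 hC
      by_cases hb : ∃ j, 0 < φ j b
      · obtain ⟨j, hj⟩ := hb
        rw [hg_pos j b hj]
        by_cases hij : i = j
        · subst hij
          have h1 : φ i a - φ i b ≤ dist a b := hlip i a b
          have h2 : |α i| * (φ i a - φ i b) ≤ |α i| * dist a b :=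
            mul_le_mul_of_nonneg_left h1 (abs_nonneg _)
          have h3 : |α i| * dist a b ≤ C * dist a b :=
            mul_le_mul_of_nonneg_right (hα i) dist_nonneg
          nlinarith [hφnn i b, abs_nonneg (α i)]
        · have hbi : b ∉ Metric.ball (x i) (r i) := fun hmem' =>
            Set.disjoint_left.1 (hdisj i j hij) hmem' (hsupp j b hj)
          have h1 := hbound (hout i a b hbi)
          have h2 : 0 ≤ |α j| * φ j b := mul_nonneg (abs_nonneg _) (hφnn j b)
          linarith
      · rw [hg_zero b (fun j => not_exists.1 hb j)]
        have h1 : φ i a ≤ dist a b := by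
          by_cases hbB : b ∈ Metric.ball (x i) (r i)
          · have hφb : φ i b = 0 := le_antisymm (not_lt.1 (not_exists.1 hb i)) (hφnn i b)
            have := hlip i a b
            linarith
          · exact hout i a b hbB
        have := hbound h1
        linarith
    · rw [hg_zero a (fun j => not_exists.1 ha j)]
      by_cases hb : ∃ j, 0 < φ j b
      · obtain ⟨j, hj⟩ := hb
        rw [hg_pos j b hj]
        have h2 : 0 ≤ |α j| * φ j b := mul_nonneg (abs_nonneg _) (hφnn j b)
        linarith
      · rw [hg_zero b (fun j => not_exists.1 hb j)]
        linarith
  have habs : ∀ a b : X, |g a - g b| ≤ C * dist a b := by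
    intro a b
    rw [abs_sub_le_iff]
    refine ⟨hgd a b, ?_⟩
    have := hgd b a
    rwa [dist_comm] at this
  have hval : ∀ i, g (x i) - g (y i) = α i * dist (x i) (y i) := by
    intro i
    rw [hgat i (x i) (Metric.mem_ball_self (hr i)), hgat i (y i) (hyB i)]
    by_cases h : 0 ≤ α i
    · have e1 : φ i (x i) = dist (x i) (y i) := by
        simp only [hφdef, if_pos h, dist_self, sub_zero]
        exact max_eq_right dist_nonneg
      have e2 : φ i (y i) = 0 := by
        simp only [hφdef, if_pos h, dist_comm (y i) (x i), sub_self]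
        exact max_self 0
      rw [e1, e2, abs_of_nonneg h, mul_zero, sub_zero]
    · have h' := not_le.1 h
      have e1 : φ i (x i) = 0 := by
        simp only [hφdef, if_neg h, sub_self]
        exact max_self 0
      have e2 : φ i (y i) = dist (x i) (y i) := by
        simp only [hφdef, if_neg h, dist_self, sub_zero]
        exact max_eq_right dist_nonneg
      rw [e1, e2, abs_of_neg h', mul_zero]
      ring
  refine ⟨fun p => g p - g z, by simp, ?_, ?_⟩
  · intro a b
    have := habs a b
    simpa using this
  · intro i
    have : g (x i) - g z - (g (y i) - g z) = α i * dist (x i) (y i) := by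
      rw [← hval i]; ring
    rw [this, mul_div_assoc, div_self (hρpos i).ne', mul_one]



/-- Let `X` be a pointed metric space with base point `z` and
`((x i, y i))_{i∈I} ⊆ X²`, `x i ≠ y i`, such that: (1) there are radii `r i > 0` with
the open balls `B(x i, r i)` pairwise disjoint; (2) for `i ≠ j`,
`(r i + r j)/d(B(x i, r i), B(x j, r j)) < 1/2`; (3) `0 < d(x i, y i) <
d(y i, X \ B(x i, r i))`. Then the family is a Lipschitz interpolating set for
`Lip₀(X)` with interpolation constant `1`; moreover for every `α ∈ ℓ_∞(I)` there is a
solution `f` of the interpolation problem with Lipschitz norm exactly `‖α‖_∞`. -/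
theorem stmt8 {X : Type*} [MetricSpace X] {I : Type*} (z : X) (x y : I → X)
    (hxy : ∀ i, x i ≠ y i) (r : I → ℝ) (hr : ∀ i, 0 < r i)
    (hdisj : ∀ i j, i ≠ j →
      Disjoint (Metric.ball (x i) (r i)) (Metric.ball (x j) (r j)))
    (hsep : ∀ i j, i ≠ j →
      (r i + r j) /
        sInf {t : ℝ | ∃ a ∈ Metric.ball (x i) (r i), ∃ b ∈ Metric.ball (x j) (r j),
          t = dist a b} < 1 / 2)
    (hin : ∀ i, 0 < dist (x i) (y i) ∧
      dist (x i) (y i) < Metric.infDist (y i) (Metric.ball (x i) (r i))ᶜ) :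
    (∀ α : I → ℝ, ∀ C : ℝ, IsLUB (Set.range fun i => |α i|) C →
      ∃ f : X → ℝ, f z = 0 ∧
        IsLeast {K : ℝ | 0 ≤ K ∧ ∀ a b : X, |f a - f b| ≤ K * dist a b} C ∧
        ∀ i, (f (x i) - f (y i)) / dist (x i) (y i) = α i) ∧
    1 = sInf {K : ℝ | 1 ≤ K ∧ ∀ α : I → ℝ, (∀ i, |α i| ≤ 1) →
      ∃ f : X → ℝ, f z = 0 ∧ (∀ a b : X, |f a - f b| ≤ K * dist a b) ∧
        ∀ i, (f (x i) - f (y i)) / dist (x i) (y i) = α i} := by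
  constructor
  · intro α C hLUB
    have hI : ∀ i, |α i| ≤ C := fun i => hLUB.1 ⟨i, rfl⟩
    have hC0 : 0 ≤ C := by
      by_cases h : Nonempty I
      · obtain ⟨i⟩ := h
        exact le_trans (abs_nonneg _) (hI i)
      · have hub : (C - 1) ∈ upperBounds (Set.range fun i => |α i|) := by
          rintro s ⟨i, rfl⟩
          exact absurd ⟨i⟩ h
        have := hLUB.2 hub
        linarith
    obtain ⟨f, hfz, hflip, hfint⟩ := key_interp z x y r hr hdisj hin α C hC0 hI
    refine ⟨f, hfz, ⟨⟨hC0, hflip⟩, ?_⟩, hfint⟩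
    intro K hK
    apply hLUB.2
    rintro s ⟨i, rfl⟩
    have h1 := hK.2 (x i) (y i)
    have h2 := hfint i
    show |α i| ≤ K
    rw [← h2, abs_div, abs_of_pos (hin i).1]
    exact (div_le_iff₀ (hin i).1).2 h1
  · have h1 : (1:ℝ) ∈ {K : ℝ | 1 ≤ K ∧ ∀ α : I → ℝ, (∀ i, |α i| ≤ 1) →
        ∃ f : X → ℝ, f z = 0 ∧ (∀ a b : X, |f a - f b| ≤ K * dist a b) ∧
          ∀ i, (f (x i) - f (y i)) / dist (x i) (y i) = α i} := by
      refine ⟨le_refl 1, fun α hα => ?_⟩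
      exact key_interp z x y r hr hdisj hin α 1 zero_le_one hα
    refine le_antisymm (le_csInf ⟨1, h1⟩ fun K hK => hK.1) (csInf_le ⟨1, fun K hK => hK.1⟩ h1)
end

section
/- Let ((x_i,y_i))_{i∈I} be a Lipschitz interpolating set for Lip_0(X) with constant M, and suppose there exists a bounded linear operator R : ℓ_∞(I) → Lip_0(X) with ‖R‖ ≤ M and T ∘ R = Id_{ℓ_∞(I)}. Then the functions f_i := R(e_i) form a Beurling set for ((x_i,y_i))_{i∈I}: f_i(0) = 0, m_{x_j,y_j}(f_i) = δ_{ij}, and sup_{(x,y), x≠y} Σ_{i∈I} |f_i(x) − f_i(y)|/d(x,y) ≤ M. -/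
/-- Let `((x i, y i))_{i∈I}` be a Lipschitz interpolating set for
`Lip₀(X)` with interpolation constant `M`, and suppose there is a linear operator
`R : ℓ_∞(I) → Lip₀(X)` with `‖R‖ ≤ M` (i.e. `Lip(R α) ≤ M‖α‖_∞`) and `T ∘ R = Id`.
Then the functions `f i := R(e i)` form a Beurling set: `f i z = 0`,
`m_{x j, y j}(f i) = δ_{ij}`, and for all `a ≠ b`,
`∑ᵢ |f i a − f i b| ≤ M · d(a,b)`. -/
theorem stmt10 {X : Type*} [MetricSpace X] {I : Type*} [DecidableEq I] (z : X)
    (x y : I → X) (hxy : ∀ i, x i ≠ y i) (M : ℝ)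
    (hinterp : ∀ α : I → ℝ, (∃ C, ∀ i, |α i| ≤ C) →
      ∃ g : X → ℝ, g z = 0 ∧ (∃ K : ℝ, ∀ a b : X, |g a - g b| ≤ K * dist a b) ∧
        ∀ i, (g (x i) - g (y i)) / dist (x i) (y i) = α i)
    (hM : M = sInf {K : ℝ | 1 ≤ K ∧ ∀ α : I → ℝ, (∀ i, |α i| ≤ 1) →
      ∃ g : X → ℝ, g z = 0 ∧ (∀ a b : X, |g a - g b| ≤ K * dist a b) ∧
        ∀ i, (g (x i) - g (y i)) / dist (x i) (y i) = α i})
    (R : (I → ℝ) → X → ℝ)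
    (hadd : ∀ α β : I → ℝ, (∃ C, ∀ i, |α i| ≤ C) → (∃ C, ∀ i, |β i| ≤ C) →
      R (α + β) = R α + R β)
    (hsmul : ∀ (c : ℝ) (α : I → ℝ), (∃ C, ∀ i, |α i| ≤ C) → R (c • α) = c • R α)
    (hR0 : ∀ α : I → ℝ, (∃ C, ∀ i, |α i| ≤ C) → R α z = 0)
    (hRnorm : ∀ α : I → ℝ, ∀ C : ℝ, (∀ i, |α i| ≤ C) →
      ∀ a b : X, |R α a - R α b| ≤ M * C * dist a b)
    (hTR : ∀ α : I → ℝ, (∃ C, ∀ i, |α i| ≤ C) →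
      ∀ i, (R α (x i) - R α (y i)) / dist (x i) (y i) = α i) :
    (∀ i, R (fun j => if j = i then (1 : ℝ) else 0) z = 0) ∧
    (∀ i j, (R (fun k => if k = i then (1 : ℝ) else 0) (x j) -
        R (fun k => if k = i then (1 : ℝ) else 0) (y j)) / dist (x j) (y j) =
        if i = j then 1 else 0) ∧
    (∀ a b : X, a ≠ b → ∃ s : ℝ,
      HasSum (fun i => |R (fun k => if k = i then (1 : ℝ) else 0) a -
        R (fun k => if k = i then (1 : ℝ) else 0) b|) s ∧ s ≤ M * dist a b) := by

  classical
  set e : I → I → ℝ := fun i j => if j = i then 1 else 0 with he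
  have he_bdd : ∀ i, ∃ C, ∀ j, |e i j| ≤ C := by
    intro i; refine ⟨1, fun j => ?_⟩
    simp only [he]; split <;> simp
  have hfin_bdd : ∀ (F : Finset I) (c : I → ℝ),
      ∃ C, ∀ j, |(fun j => if j ∈ F then c j else 0) j| ≤ C := by
    intro F c
    refine ⟨∑ i ∈ F, |c i|, fun j => ?_⟩
    by_cases h : j ∈ F
    · simp only [h, if_true]
      exact Finset.single_le_sum (fun i _ => abs_nonneg (c i)) h
    · simp only [h, if_false, abs_zero]
      exact Finset.sum_nonneg fun i _ => abs_nonneg (c i)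
  have hR0' : R 0 = 0 := by
    have := hsmul 0 0 ⟨0, fun i => by simp⟩
    simpa using this
  have hkey : ∀ (F : Finset I) (c : I → ℝ),
      R (fun j => if j ∈ F then c j else 0) = fun p => ∑ i ∈ F, c i * R (e i) p := by
    intro F
    induction F using Finset.induction_on with
    | empty =>
      intro c
      have : (fun j => if j ∈ (∅ : Finset I) then c j else 0) = (0 : I → ℝ) := by
        funext j; simp
      rw [this, hR0']; funext p; simp
    | @insert i F hiF ih =>
      intro c
      have hsplit : (fun j => if j ∈ insert i F then c j else 0)
          = (c i • e i) + (fun j => if j ∈ F then c j else 0) := by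
        funext j
        by_cases hj : j = i
        · subst hj
          simp [he, hiF]
        · simp [he, hj, Finset.mem_insert]
      rw [hsplit, hadd _ _ ⟨|c i|, fun j => by
          simp only [Pi.smul_apply, he, smul_eq_mul]
          split <;> simp [abs_nonneg]⟩ (hfin_bdd F c),
        hsmul (c i) (e i) (he_bdd i), ih c]
      funext p
      simp [Finset.sum_insert hiF]
  refine ⟨?_, ?_, ?_⟩
  · intro i
    exact hR0 _ (he_bdd i)
  · intro i j
    have := hTR (e i) (he_bdd i) j
    simp only [he] at this ⊢
    rw [this]
    by_cases h : i = j <;> simp [h, eq_comm]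
  · intro a b hab
    set g : I → ℝ := fun i => R (e i) a - R (e i) b with hg
    have hbound : ∀ F : Finset I, ∑ i ∈ F, |g i| ≤ M * dist a b := by
      intro F
      set c : I → ℝ := fun i => if 0 ≤ g i then 1 else -1 with hc
      have hsum : ∑ i ∈ F, |g i| = ∑ i ∈ F, c i * g i := by
        refine Finset.sum_congr rfl fun i _ => ?_
        by_cases h : 0 ≤ g i
        · simp [hc, h, abs_of_nonneg h]
        · simp [hc, h, abs_of_neg (lt_of_not_ge h)]
      set α : I → ℝ := fun j => if j ∈ F then c j else 0 with hα
      have hα1 : ∀ j, |α j| ≤ 1 := by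
        intro j
        simp only [hα, hc]
        split
        · split <;> simp
        · simp
      have hRa : R α a = ∑ i ∈ F, c i * R (e i) a := by rw [hα, hkey F c]
      have hRb : R α b = ∑ i ∈ F, c i * R (e i) b := by rw [hα, hkey F c]
      have hdiff : R α a - R α b = ∑ i ∈ F, c i * g i := by
        rw [hRa, hRb, ← Finset.sum_sub_distrib]
        exact Finset.sum_congr rfl fun i _ => by rw [hg]; ring
      calc ∑ i ∈ F, |g i| = R α a - R α b := by rw [hsum, hdiff]
        _ ≤ |R α a - R α b| := le_abs_self _
        _ ≤ M * 1 * dist a b := hRnorm α 1 hα1 a b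
        _ = M * dist a b := by ring
    have hnn : ∀ i, 0 ≤ |g i| := fun i => abs_nonneg _
    have hsummable : Summable fun i => |g i| :=
      summable_of_sum_le hnn hbound
    exact ⟨_, hsummable.hasSum, Summable.tsum_le_of_sum_le hsummable hbound⟩
end

section
/- Let ((x_i,y_i))_{i∈I} be a Lipschitz interpolating set in X² for Lip_0(X) with interpolation constant M, admitting a Beurling set (f_i)_{i∈I}. Then the lifting operator R : ℓ_∞(I) → Lip_0(X), R(α) = Σ_{i∈I} α_i f_i, is weak*-to-weak* continuous (with respect to the preduals ℓ_1(I) and F(X)). -/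
/-- Let `((x i, y i))_{i∈I}` be a Lipschitz interpolating set for
`Lip₀(X)` with interpolation constant `M` admitting a Beurling set `(f i)`, and let
`R : ℓ_∞(I) → Lip₀(X)` be the lifting `R α = ∑ᵢ α i • f i`. Then `R` is
weak*-to-weak* continuous (w.r.t. the preduals `ℓ₁(I)` and `F(X)`): for every element
`γ = ∑ₙ μ n · m_{u n, v n}` of the free space `F(X)` (given by an absolutely summable
series of molecules), the weak*-continuous functional `γ ∘ R` is represented by an
element `lam ∈ ℓ₁(I)`, i.e. `γ(R α) = ∑ᵢ lam i · α i` for every `α ∈ ℓ_∞(I)`. -/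
theorem stmt11 {X : Type*} [MetricSpace X] {I : Type*} [DecidableEq I] (z : X)
    (x y : I → X) (hxy : ∀ i, x i ≠ y i) (M : ℝ)
    (hinterp : ∀ α : I → ℝ, (∃ C, ∀ i, |α i| ≤ C) →
      ∃ g : X → ℝ, g z = 0 ∧ (∃ K : ℝ, ∀ a b : X, |g a - g b| ≤ K * dist a b) ∧
        ∀ i, (g (x i) - g (y i)) / dist (x i) (y i) = α i)
    (hM : M = sInf {K : ℝ | 1 ≤ K ∧ ∀ α : I → ℝ, (∀ i, |α i| ≤ 1) →
      ∃ g : X → ℝ, g z = 0 ∧ (∀ a b : X, |g a - g b| ≤ K * dist a b) ∧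
        ∀ i, (g (x i) - g (y i)) / dist (x i) (y i) = α i})
    (f : I → X → ℝ)
    (hf0 : ∀ i, f i z = 0)
    (hδ : ∀ i j, (f i (x j) - f i (y j)) / dist (x j) (y j) = if i = j then 1 else 0)
    (hB : ∀ a b : X, a ≠ b →
      ∃ s : ℝ, HasSum (fun i => |f i a - f i b|) s ∧ s ≤ M * dist a b) :
    ∀ (μ : ℕ → ℝ) (u v : ℕ → X), Summable (fun n => |μ n|) → (∀ n, u n ≠ v n) →
      ∃ lam : I → ℝ, Summable (fun i => |lam i|) ∧
        ∀ α : I → ℝ, (∃ C, ∀ i, |α i| ≤ C) →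
          ∑' n, μ n *
            (((∑' i, α i * f i (u n)) - ∑' i, α i * f i (v n)) / dist (u n) (v n)) =
          ∑' i, lam i * α i := by
  intro μ u v hμ huv
  set d : ℕ → ℝ := fun n => dist (u n) (v n) with hd
  have hdpos : ∀ n, 0 < d n := fun n => dist_pos.mpr (huv n)
  -- the coefficient array
  set g : ℕ → I → ℝ := fun n i => μ n * (f i (u n) - f i (v n)) / d n with hgdef
  obtain ⟨s, hs, hsle⟩ :
      ∃ s : ℕ → ℝ, (∀ n, HasSum (fun i => |f i (u n) - f i (v n)|) (s n)) ∧
        ∀ n, s n ≤ M * d n := by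
    choose s hs hsle using fun n => hB (u n) (v n) (huv n)
    exact ⟨s, hs, hsle⟩
  -- absolute sums of g in i
  have hgabs : ∀ n, HasSum (fun i => |g n i|) (|μ n| / d n * s n) := by
    intro n
    have h1 : (fun i => |g n i|)
        = fun i => (|μ n| / d n) * |f i (u n) - f i (v n)| := by
      funext i
      rw [hgdef]
      rw [abs_div, abs_mul, abs_of_pos (hdpos n)]
      ring
    rw [h1]
    exact (hs n).mul_left _
  have hgabs_le : ∀ n, ∑' i, |g n i| ≤ |μ n| * M := by
    intro n
    rw [(hgabs n).tsum_eq]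
    have h1 : |μ n| / d n * s n ≤ |μ n| / d n * (M * d n) :=
      mul_le_mul_of_nonneg_left (hsle n) (div_nonneg (abs_nonneg _) (hdpos n).le)
    have h2 : |μ n| / d n * (M * d n) = |μ n| * M := by
      have hdn : d n ≠ 0 := (hdpos n).ne'
      field_simp
    linarith
  -- absolute summability on ℕ × I
  have hG : Summable (fun p : ℕ × I => |g p.1 p.2|) := by
    rw [summable_prod_of_nonneg (fun p => abs_nonneg _)]
    refine ⟨fun n => (hgabs n).summable, ?_⟩
    refine Summable.of_nonneg_of_le (fun n => tsum_nonneg fun i => abs_nonneg _)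
      (fun n => hgabs_le n) (hμ.mul_right M)
  have hGswap : Summable (fun p : I × ℕ => |g p.2 p.1|) := hG.prod_symm
  have hlamabs : Summable (fun i => ∑' n, |g n i|) := by
    have := (summable_prod_of_nonneg
      (f := fun p : I × ℕ => |g p.2 p.1|) (fun p => abs_nonneg _)).mp hGswap
    exact this.2
  refine ⟨fun i => ∑' n, g n i, ?_, ?_⟩
  · -- summability of |lam|
    refine Summable.of_nonneg_of_le (fun i => abs_nonneg _) (fun i => ?_) hlamabs
    have hsl : Summable fun n => |g n i| := hGswap.prod_factor i
    simpa [Real.norm_eq_abs] using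
      norm_tsum_le_tsum_norm (f := fun n => g n i)
        (by simpa [Real.norm_eq_abs] using hsl)
  · rintro α ⟨C, hC⟩
    have hCabs : ∀ i, |α i| ≤ |C| := fun i => (hC i).trans (le_abs_self C)
    -- summability of the fibers
    have habsf : ∀ a : X, Summable fun i => |f i a| := by
      intro a
      by_cases h : a = z
      · subst h; simp only [hf0]; simpa using summable_zero
      · obtain ⟨t, ht, -⟩ := hB a z h
        have : (fun i => |f i a - f i z|) = fun i => |f i a| := by
          funext i; rw [hf0 i, sub_zero]
        exact this ▸ ht.summable
    have hαf : ∀ a : X, Summable fun i => α i * f i a := by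
      intro a
      refine Summable.of_abs (Summable.of_nonneg_of_le (fun i => abs_nonneg _)
        (fun i => ?_) ((habsf a).mul_left |C|))
      rw [abs_mul]
      exact mul_le_mul_of_nonneg_right (hCabs i) (abs_nonneg _)
    -- summability of F(n,i) = α i * g n i on ℕ × I
    have hF : Summable (fun p : ℕ × I => α p.2 * g p.1 p.2) := by
      refine Summable.of_abs (Summable.of_nonneg_of_le (fun p => abs_nonneg _)
        (fun p => ?_) (hG.mul_left |C|))
      rw [abs_mul]
      exact mul_le_mul_of_nonneg_right (hCabs p.2) (abs_nonneg _)
    -- pointwise in n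
    have key : ∀ n, μ n *
        (((∑' i, α i * f i (u n)) - ∑' i, α i * f i (v n)) / dist (u n) (v n))
        = ∑' i, α i * g n i := by
      intro n
      rw [← Summable.tsum_sub (hαf (u n)) (hαf (v n))]
      have h1 : (fun i => α i * f i (u n) - α i * f i (v n))
          = fun i => α i * (f i (u n) - f i (v n)) := by funext i; ring
      rw [h1]
      have h2 : (fun i => α i * g n i)
          = fun i => (μ n / d n) * (α i * (f i (u n) - f i (v n))) := by
        funext i; rw [hgdef]; ring
      rw [h2, tsum_mul_left]
      have : dist (u n) (v n) = d n := rfl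
      rw [this]
      field_simp
    calc ∑' n, μ n *
          (((∑' i, α i * f i (u n)) - ∑' i, α i * f i (v n)) / dist (u n) (v n))
        = ∑' n, ∑' i, α i * g n i := tsum_congr key
      _ = ∑' i, ∑' n, α i * g n i :=
          (Summable.tsum_comm (f := fun n i => α i * g n i) hF).symm
      _ = ∑' i, α i * ∑' n, g n i := by
          refine tsum_congr fun i => ?_
          exact tsum_mul_left
      _ = ∑' i, (∑' n, g n i) * α i := tsum_congr fun i => mul_comm _ _
end

section
/- Let {(x_1,y_1), (x_2,y_2)} be a two-element Lipschitz interpolating set in X² for Lip_0(X) with interpolation constant M. Then there exists a Beurling set {f_1, f_2} in Lip_0(X) for it; i.e., there is a bounded linear operator R : ℓ_∞² → Lip_0(X) with ‖R‖ ≤ M and T∘R = Id_{ℓ_∞²}. -/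
open Filter Set Topology

/-- Let `{(x₁,y₁), (x₂,y₂)}` be a two-element Lipschitz
interpolating set in `X²` for `Lip₀(X)` with interpolation constant `M`. Then there is
a Beurling set `{f₁, f₂}` for it: `f₁ z = f₂ z = 0`, `m_{x_j,y_j}(f_i) = δ_{ij}`, and
`|f₁ a − f₁ b| + |f₂ a − f₂ b| ≤ M · d(a,b)` for all `a, b` (equivalently, there is a
bounded linear lifting `R : ℓ_∞² → Lip₀(X)` with `‖R‖ ≤ M` and `T ∘ R = Id`). -/
theorem stmt14 {X : Type*} [MetricSpace X] (z x₁ y₁ x₂ y₂ : X)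
    (h1 : x₁ ≠ y₁) (h2 : x₂ ≠ y₂) (M : ℝ)
    (hinterp : ∀ α₁ α₂ : ℝ, ∃ f : X → ℝ, f z = 0 ∧
      (∃ K : ℝ, ∀ a b : X, |f a - f b| ≤ K * dist a b) ∧
      (f x₁ - f y₁) / dist x₁ y₁ = α₁ ∧ (f x₂ - f y₂) / dist x₂ y₂ = α₂)
    (hM : M = sInf {K : ℝ | 1 ≤ K ∧ ∀ α₁ α₂ : ℝ, |α₁| ≤ 1 → |α₂| ≤ 1 →
      ∃ f : X → ℝ, f z = 0 ∧ (∀ a b : X, |f a - f b| ≤ K * dist a b) ∧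
        (f x₁ - f y₁) / dist x₁ y₁ = α₁ ∧ (f x₂ - f y₂) / dist x₂ y₂ = α₂}) :
    ∃ f₁ f₂ : X → ℝ, f₁ z = 0 ∧ f₂ z = 0 ∧
      (f₁ x₁ - f₁ y₁) / dist x₁ y₁ = 1 ∧ (f₁ x₂ - f₁ y₂) / dist x₂ y₂ = 0 ∧
      (f₂ x₁ - f₂ y₁) / dist x₁ y₁ = 0 ∧ (f₂ x₂ - f₂ y₂) / dist x₂ y₂ = 1 ∧
      ∀ a b : X, |f₁ a - f₁ b| + |f₂ a - f₂ b| ≤ M * dist a b := by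
  set S : Set ℝ := {K : ℝ | 1 ≤ K ∧ ∀ α₁ α₂ : ℝ, |α₁| ≤ 1 → |α₂| ≤ 1 →
      ∃ f : X → ℝ, f z = 0 ∧ (∀ a b : X, |f a - f b| ≤ K * dist a b) ∧
        (f x₁ - f y₁) / dist x₁ y₁ = α₁ ∧ (f x₂ - f y₂) / dist x₂ y₂ = α₂} with hS
  -- S is nonempty
  obtain ⟨p, hpz, ⟨K₁, hK₁⟩, hp1, hp2⟩ := hinterp 1 0
  obtain ⟨q, hqz, ⟨K₂, hK₂⟩, hq1, hq2⟩ := hinterp 0 1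
  have hSne : S.Nonempty := by
    refine ⟨max 1 (K₁ + K₂), le_max_left _ _, fun α₁ α₂ ha1 ha2 => ?_⟩
    refine ⟨fun a => α₁ * p a + α₂ * q a, by show α₁ * p z + α₂ * q z = 0; rw [hpz, hqz]; ring, fun a b => ?_, ?_, ?_⟩
    · have e1 := hK₁ a b
      have e2 := hK₂ a b
      have ha1' : |α₁ * p a + α₂ * q a - (α₁ * p b + α₂ * q b)|
          ≤ |α₁| * |p a - p b| + |α₂| * |q a - q b| := by
        have : α₁ * p a + α₂ * q a - (α₁ * p b + α₂ * q b)
            = α₁ * (p a - p b) + α₂ * (q a - q b) := by ring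
        rw [this]
        calc _ ≤ |α₁ * (p a - p b)| + |α₂ * (q a - q b)| := abs_add_le _ _
          _ = _ := by rw [abs_mul, abs_mul]
      have hd : (0:ℝ) ≤ dist a b := dist_nonneg
      have b1 : |α₁| * |p a - p b| ≤ K₁ * dist a b := by
        calc |α₁| * |p a - p b| ≤ 1 * |p a - p b| :=
              mul_le_mul_of_nonneg_right ha1 (abs_nonneg _)
          _ = |p a - p b| := one_mul _
          _ ≤ K₁ * dist a b := e1
      have b2 : |α₂| * |q a - q b| ≤ K₂ * dist a b := by
        calc |α₂| * |q a - q b| ≤ 1 * |q a - q b| :=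
              mul_le_mul_of_nonneg_right ha2 (abs_nonneg _)
          _ = |q a - q b| := one_mul _
          _ ≤ K₂ * dist a b := e2
      have : (K₁ + K₂) * dist a b ≤ max 1 (K₁ + K₂) * dist a b :=
        mul_le_mul_of_nonneg_right (le_max_right _ _) hd
      linarith
    · have : (α₁ * p x₁ + α₂ * q x₁ - (α₁ * p y₁ + α₂ * q y₁)) / dist x₁ y₁
          = α₁ * ((p x₁ - p y₁) / dist x₁ y₁) + α₂ * ((q x₁ - q y₁) / dist x₁ y₁) := by
        ring
      rw [this, hp1, hq1]; ring
    · have : (α₁ * p x₂ + α₂ * q x₂ - (α₁ * p y₂ + α₂ * q y₂)) / dist x₂ y₂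
          = α₁ * ((p x₂ - p y₂) / dist x₂ y₂) + α₂ * ((q x₂ - q y₂) / dist x₂ y₂) := by
        ring
      rw [this, hp2, hq2]; ring
  -- choose near-optimal functions for directions (1,1) and (1,-1)
  have hchoice : ∀ n : ℕ, ∃ g h : X → ℝ, g z = 0 ∧ h z = 0 ∧
      (∀ a b : X, |g a - g b| ≤ (M + 1/(n+1)) * dist a b) ∧
      (∀ a b : X, |h a - h b| ≤ (M + 1/(n+1)) * dist a b) ∧
      (g x₁ - g y₁) / dist x₁ y₁ = 1 ∧ (g x₂ - g y₂) / dist x₂ y₂ = 1 ∧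
      (h x₁ - h y₁) / dist x₁ y₁ = 1 ∧ (h x₂ - h y₂) / dist x₂ y₂ = -1 := by
    intro n
    have hε : (0:ℝ) < 1/(n+1) := by positivity
    obtain ⟨K, hKS, hKlt⟩ := Real.lt_sInf_add_pos hSne hε
    rw [← hM] at hKlt
    obtain ⟨g, hgz, hglip, hg1, hg2⟩ := hKS.2 1 1 (by norm_num) (by norm_num)
    obtain ⟨h, hhz, hhlip, hh1, hh2⟩ := hKS.2 1 (-1) (by norm_num) (by norm_num)
    refine ⟨g, h, hgz, hhz, fun a b => ?_, fun a b => ?_, hg1, hg2, hh1, hh2⟩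
    · exact (hglip a b).trans (mul_le_mul_of_nonneg_right hKlt.le dist_nonneg)
    · exact (hhlip a b).trans (mul_le_mul_of_nonneg_right hKlt.le dist_nonneg)
  choose g h hgz hhz hglip hhlip hg1 hg2 hh1 hh2 using hchoice
  -- ultrafilter limit
  let U : Ultrafilter ℕ := Ultrafilter.of atTop
  have hUle : (U : Filter ℕ) ≤ atTop := Ultrafilter.of_le atTop
  have key : ∀ (F : ℕ → ℝ) (C : ℝ), (∀ n, |F n| ≤ C) →
      ∃ L, Tendsto F (U : Filter ℕ) (𝓝 L) := by
    intro F C hF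
    obtain ⟨a, -, ha⟩ := (isCompact_Icc (a := -C) (b := C)).ultrafilter_le_nhds (U.map F)
      (by
        rw [Ultrafilter.coe_map, le_principal_iff]
        exact Filter.eventually_map.mpr (Eventually.of_forall fun n => abs_le.mp (hF n)))
    exact ⟨a, ha⟩
  have boundg : ∀ (F : ℕ → X → ℝ), (∀ n, F n z = 0) →
      (∀ n a b, |F n a - F n b| ≤ (M + 1/(n+1)) * dist a b) →
      ∀ a : X, ∃ L, Tendsto (fun n => F n a) (U : Filter ℕ) (𝓝 L) := by
    intro F hFz hFlip a
    refine key _ ((M + 1) * dist a z) fun n => ?_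
    have := hFlip n a z
    rw [hFz n, sub_zero] at this
    refine this.trans (mul_le_mul_of_nonneg_right ?_ dist_nonneg)
    have : (1:ℝ)/(n+1) ≤ 1 := by
      rw [div_le_one (by positivity)]
      linarith [Nat.cast_nonneg (α := ℝ) n]
    linarith
  choose G hG using boundg g hgz hglip
  choose H hH using boundg h hhz hhlip
  -- limits of values
  have hGz : G z = 0 := by
    have := hG z
    simp only [hgz] at this
    exact tendsto_nhds_unique this tendsto_const_nhds
  have hHz : H z = 0 := by
    have := hH z
    simp only [hhz] at this
    exact tendsto_nhds_unique this tendsto_const_nhds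
  have hlimratio : ∀ (F : ℕ → X → ℝ) (L : X → ℝ)
      (hL : ∀ a, Tendsto (fun n => F n a) (U : Filter ℕ) (𝓝 (L a)))
      (u v : X) (c : ℝ), (∀ n, (F n u - F n v) / dist u v = c) →
      (L u - L v) / dist u v = c := by
    intro F L hL u v c hc
    have t1 : Tendsto (fun n => (F n u - F n v) / dist u v) (U : Filter ℕ)
        (𝓝 ((L u - L v) / dist u v)) := ((hL u).sub (hL v)).div_const _
    have t2 : Tendsto (fun n => (F n u - F n v) / dist u v) (U : Filter ℕ) (𝓝 c) := by
      simp only [hc]; exact tendsto_const_nhds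
    exact tendsto_nhds_unique t1 t2
  have hG1 := hlimratio g G hG x₁ y₁ 1 hg1
  have hG2 := hlimratio g G hG x₂ y₂ 1 hg2
  have hH1 := hlimratio h H hH x₁ y₁ 1 hh1
  have hH2 := hlimratio h H hH x₂ y₂ (-1) hh2
  -- Lipschitz bounds for limits
  have hlip : ∀ (F : ℕ → X → ℝ) (L : X → ℝ)
      (hL : ∀ a, Tendsto (fun n => F n a) (U : Filter ℕ) (𝓝 (L a)))
      (hFlip : ∀ n a b, |F n a - F n b| ≤ (M + 1/(n+1)) * dist a b)
      (a b : X), |L a - L b| ≤ M * dist a b := by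
    intro F L hL hFlip a b
    have t1 : Tendsto (fun n => |F n a - F n b|) (U : Filter ℕ) (𝓝 (|L a - L b|)) :=
      ((hL a).sub (hL b)).abs
    have t2 : Tendsto (fun n : ℕ => (M + 1/(n+1)) * dist a b) (U : Filter ℕ)
        (𝓝 (M * dist a b)) := by
      have : Tendsto (fun n : ℕ => (M + 1/(n+1)) * dist a b) atTop (𝓝 ((M + 0) * dist a b)) :=
        (tendsto_const_nhds.add tendsto_one_div_add_atTop_nhds_zero_nat).mul_const _
      rw [add_zero] at this
      exact this.mono_left hUle
    exact le_of_tendsto_of_tendsto' t1 t2 fun n => hFlip n a b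
  have hGlip := hlip g G hG hglip
  have hHlip := hlip h H hH hhlip
  -- recombine
  refine ⟨fun a => (G a + H a) / 2, fun a => (G a - H a) / 2,
    by show (G z + H z) / 2 = 0; rw [hGz, hHz]; ring,
    by show (G z - H z) / 2 = 0; rw [hGz, hHz]; ring, ?_, ?_, ?_, ?_, ?_⟩
  · have : ((G x₁ + H x₁) / 2 - (G y₁ + H y₁) / 2) / dist x₁ y₁
        = ((G x₁ - G y₁) / dist x₁ y₁ + (H x₁ - H y₁) / dist x₁ y₁) / 2 := by ring
    rw [this, hG1, hH1]; norm_num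
  · have : ((G x₂ + H x₂) / 2 - (G y₂ + H y₂) / 2) / dist x₂ y₂
        = ((G x₂ - G y₂) / dist x₂ y₂ + (H x₂ - H y₂) / dist x₂ y₂) / 2 := by ring
    rw [this, hG2, hH2]; norm_num
  · have : ((G x₁ - H x₁) / 2 - (G y₁ - H y₁) / 2) / dist x₁ y₁
        = ((G x₁ - G y₁) / dist x₁ y₁ - (H x₁ - H y₁) / dist x₁ y₁) / 2 := by ring
    rw [this, hG1, hH1]; norm_num
  · have : ((G x₂ - H x₂) / 2 - (G y₂ - H y₂) / 2) / dist x₂ y₂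
        = ((G x₂ - G y₂) / dist x₂ y₂ - (H x₂ - H y₂) / dist x₂ y₂) / 2 := by ring
    rw [this, hG2, hH2]; norm_num
  · intro a b
    have hu := hGlip a b
    have hv := hHlip a b
    have e1 : (G a + H a) / 2 - (G b + H b) / 2 = ((G a - G b) + (H a - H b)) / 2 := by ring
    have e2 : (G a - H a) / 2 - (G b - H b) / 2 = ((G a - G b) - (H a - H b)) / 2 := by ring
    rw [e1, e2]
    have n1 : -|G a - G b| ≤ G a - G b := neg_abs_le _
    have n2 : (G a - G b) ≤ |G a - G b| := le_abs_self _
    have n3 : -|H a - H b| ≤ H a - H b := neg_abs_le _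
    have n4 : (H a - H b) ≤ |H a - H b| := le_abs_self _
    rcases abs_cases (((G a - G b) + (H a - H b)) / 2) with ⟨w1, -⟩ | ⟨w1, -⟩ <;>
      rcases abs_cases (((G a - G b) - (H a - H b)) / 2) with ⟨w2, -⟩ | ⟨w2, -⟩ <;>
      rw [w1, w2] <;> linarith
end

section
/- Let X be a finite pointed metric space and D = ((x_i,y_i))_{i∈I} ⊆ X² with x_i ≠ y_i, such that (X, D) is a connected graph. The following are equivalent: (i) (X, D) contains no cycle; (ii) the Lipschitz interpolating operator T : Lip_0(X) → ℓ_∞(I) associated to D is surjective; (iii) D admits a finite Beurling set of functions in Lip_0(X). Moreover, when (i) holds, T is a bijection. -/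
/-!
Write `L f = (f z, T f)`. When `G` is connected, a function killed by `L` is constant along
edges, hence zero, so `L : ℝ^X → ℝ × ℝ^I` is injective. Since `I` indexes the edges of `G`
bijectively, `L` is then surjective iff `|X| = |E(G)| + 1`, which for a connected graph says
exactly that `G` is a tree; surjectivity of `L` is (ii), and injectivity gives uniqueness.
A Beurling set `(fᵢ)` produces the preimage `∑ αᵢ fᵢ` of `(0, α)`; conversely, preimages of the
unit vectors form a Beurling set because every function on a finite metric space is Lipschitz.
-/

open SimpleGraph Module Function

theorem LinearMap.surjective_iff_finrank_eq_of_injective {K V W : Type*} [DivisionRing K]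
    [AddCommGroup V] [Module K V] [AddCommGroup W] [Module K W] [FiniteDimensional K V]
    [FiniteDimensional K W] {f : V →ₗ[K] W} (hf : Injective f) :
    Surjective f ↔ finrank K V = finrank K W :=
  ⟨fun hs ↦ (finrank_le_finrank_of_injective hf).antisymm (finrank_le_finrank_of_surjective hs),
    fun h ↦ (injective_iff_surjective_of_finrank_eq_finrank h).1 hf⟩

open scoped NNReal in
theorem exists_lipschitzWith_of_finite {α β : Type*} [MetricSpace α] [Finite α]
    [PseudoMetricSpace β] (f : α → β) : ∃ K : ℝ≥0, LipschitzWith K f := by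
  have := Fintype.ofFinite α
  refine ⟨Finset.univ.sup fun p : α × α ↦ nndist (f p.1) (f p.2) / nndist p.1 p.2,
    .of_dist_le_mul fun a b ↦ ?_⟩
  simp only [dist_nndist]
  norm_cast
  rcases eq_or_ne a b with rfl | hab
  · simp
  calc nndist (f a) (f b) = nndist (f a) (f b) / nndist a b * nndist a b :=
        (div_mul_cancel₀ _ (by simpa using hab)).symm
    _ ≤ _ := by
        gcongr
        exact Finset.le_sup (f := fun p : α × α ↦ nndist (f p.1) (f p.2) / nndist p.1 p.2)
          (Finset.mem_univ (a, b))

theorem SimpleGraph.Reachable.eq_of_forall_adj {V β : Type*} {G : SimpleGraph V} {f : V → β}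
    (h : ∀ a b, G.Adj a b → f a = f b) {u v : V} (huv : G.Reachable u v) : f u = f v := by
  obtain ⟨p⟩ := huv
  induction p with
  | nil => rfl
  | cons hadj _ ih => exact (h _ _ hadj).trans ih

section EdgeFamily

variable {V I : Type*} {G : SimpleGraph V} {x y : I → V}

theorem SimpleGraph.edgeSet_eq_range_of_adj_iff
    (hG : ∀ a b, G.Adj a b ↔ ∃ i, (x i = a ∧ y i = b) ∨ (x i = b ∧ y i = a)) :
    G.edgeSet = Set.range fun i ↦ s(x i, y i) := by
  ext ⟨a, b⟩
  simp [hG]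

theorem SimpleGraph.adj_of_edgeSet_eq_range (hE : G.edgeSet = Set.range fun i ↦ s(x i, y i))
    (i : I) : G.Adj (x i) (y i) :=
  G.mem_edgeSet.1 (hE ▸ ⟨i, rfl⟩)

end EdgeFamily

section Interpolation

variable {X I : Type*} [MetricSpace X] (z : X) (x y : I → X)

/-- The interpolating operator `T` paired with evaluation at the base point: `T` on `Lip₀(X)` is
the second component restricted to `{f | f z = 0}`. -/
noncomputable def interpolationMap : (X → ℝ) →ₗ[ℝ] ℝ × (I → ℝ) where
  toFun f := (f z, fun i ↦ (f (x i) - f (y i)) / dist (x i) (y i))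
  map_add' f g := by ext <;> simp [add_sub_add_comm, add_div]
  map_smul' c f := by ext <;> simp [← mul_sub, mul_div_assoc]

variable {z x y}

theorem interpolationMap_eq_zero_prod_iff {f : X → ℝ} {α : I → ℝ} :
    interpolationMap z x y f = (0, α) ↔
      f z = 0 ∧ ∀ i, (f (x i) - f (y i)) / dist (x i) (y i) = α i := by
  simp [interpolationMap, funext_iff]

theorem surjective_interpolationMap_iff_forall_exists :
    Surjective (interpolationMap z x y) ↔ ∀ α, ∃ f, interpolationMap z x y f = (0, α) := by
  refine ⟨fun h α ↦ h (0, α), fun h ⟨c, α⟩ ↦ ?_⟩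
  obtain ⟨f, hf⟩ := h α
  refine ⟨f + fun _ ↦ c, ?_⟩
  rw [map_add, hf]
  ext <;> simp [interpolationMap]

theorem interpolationMap_sum_smul [Fintype I] [DecidableEq I] {f : I → X → ℝ}
    (hf : ∀ i, interpolationMap z x y (f i) = (0, fun j ↦ if i = j then 1 else 0))
    (α : I → ℝ) : interpolationMap z x y (∑ i, α i • f i) = (0, α) := by
  ext j <;> simp [hf, Prod.fst_sum, Prod.snd_sum, Finset.sum_apply]

theorem exists_beurling_family [Finite X] [Fintype I] [DecidableEq I]
    (h : ∀ α, ∃ f, interpolationMap z x y f = (0, α)) :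
    ∃ M : ℝ, ∃ f : I → X → ℝ,
      (∀ i, interpolationMap z x y (f i) = (0, fun j ↦ if i = j then 1 else 0)) ∧
      ∀ a b, ∑ i, |f i a - f i b| ≤ M * dist a b := by
  choose f hf using fun i ↦ h fun j ↦ if i = j then 1 else 0
  choose K hK using fun i ↦ exists_lipschitzWith_of_finite (f i)
  refine ⟨∑ i, K i, f, hf, fun a b ↦ ?_⟩
  rw [Finset.sum_mul]
  exact Finset.sum_le_sum fun i _ ↦ by simpa [Real.dist_eq] using (hK i).dist_le_mul a b

variable {G : SimpleGraph X} (hE : G.edgeSet = Set.range fun i ↦ s(x i, y i))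
include hE

theorem interpolationMap_injective (hconn : G.Connected) : Injective (interpolationMap z x y) := by
  refine (injective_iff_map_eq_zero _).2 fun f hf ↦ funext fun v ↦ ?_
  rw [← Prod.mk_zero_zero] at hf
  obtain ⟨hz, hT⟩ := interpolationMap_eq_zero_prod_iff.1 hf
  have hadj : ∀ a b, G.Adj a b → f a = f b := by
    intro a b hab
    obtain ⟨i, hi⟩ : s(a, b) ∈ Set.range fun i ↦ s(x i, y i) := hE ▸ hab
    have hd : dist (x i) (y i) ≠ 0 := dist_ne_zero.2 (G.adj_of_edgeSet_eq_range hE i).ne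
    have hxy := hT i
    rw [Pi.zero_apply, div_eq_zero_iff, sub_eq_zero, or_iff_left hd] at hxy
    rcases Sym2.eq_iff.1 hi with ⟨rfl, rfl⟩ | ⟨rfl, rfl⟩
    exacts [hxy, hxy.symm]
  exact ((hconn v z).eq_of_forall_adj hadj).trans hz

theorem surjective_interpolationMap_iff_isAcyclic [Finite X] [Finite I]
    (hinj : Injective fun i ↦ s(x i, y i)) (hconn : G.Connected) :
    Surjective (interpolationMap z x y) ↔ G.IsAcyclic := by
  have := Fintype.ofFinite X
  have := Fintype.ofFinite I
  rw [LinearMap.surjective_iff_finrank_eq_of_injective (interpolationMap_injective hE hconn),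
    finrank_prod, finrank_self, finrank_fintype_fun_eq_card, finrank_fintype_fun_eq_card,
    ← Nat.card_eq_fintype_card, ← Nat.card_eq_fintype_card, ← Nat.card_range_of_injective hinj,
    ← hE, eq_comm, add_comm]
  exact ⟨fun h ↦ (isTree_iff_connected_and_card.2 ⟨hconn, h⟩).isAcyclic,
    fun h ↦ (isTree_iff_connected_and_card.1 ⟨hconn, h⟩).2⟩

end Interpolation

theorem stmt15_general {X : Type*} [MetricSpace X] [Fintype X] {I : Type*} [Fintype I]
    [DecidableEq I] (z : X) (x y : I → X)
    (hinj : ∀ i j, (x i = x j ∧ y i = y j) ∨ (x i = y j ∧ y i = x j) → i = j)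
    (G : SimpleGraph X)
    (hG : ∀ a b : X, G.Adj a b ↔ ∃ i, (x i = a ∧ y i = b) ∨ (x i = b ∧ y i = a))
    (hconn : G.Connected) :
    (G.IsAcyclic ↔ ∀ α : I → ℝ, ∃ f : X → ℝ, f z = 0 ∧
      ∀ i, (f (x i) - f (y i)) / dist (x i) (y i) = α i) ∧
    (G.IsAcyclic ↔ ∃ M : ℝ, ∃ f : I → X → ℝ, (∀ i, f i z = 0) ∧
      (∀ i j, (f i (x j) - f i (y j)) / dist (x j) (y j) = if i = j then 1 else 0) ∧
      ∀ a b : X, a ≠ b → ∑ i, |f i a - f i b| ≤ M * dist a b) ∧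
    (G.IsAcyclic → ∀ α : I → ℝ, ∃! f : X → ℝ, f z = 0 ∧
      ∀ i, (f (x i) - f (y i)) / dist (x i) (y i) = α i) := by
  have hE := edgeSet_eq_range_of_adj_iff hG
  have hT : G.IsAcyclic ↔ ∀ α, ∃ f, interpolationMap z x y f = (0, α) := by
    rw [← surjective_interpolationMap_iff_forall_exists,
      surjective_interpolationMap_iff_isAcyclic hE (fun i j h ↦ hinj i j (Sym2.eq_iff.1 h)) hconn]
  have hbasis (f : I → X → ℝ) :
      (∀ i, interpolationMap z x y (f i) = (0, fun j ↦ if i = j then 1 else 0)) ↔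
        (∀ i, f i z = 0) ∧
          ∀ i j, (f i (x j) - f i (y j)) / dist (x j) (y j) = if i = j then 1 else 0 := by
    simp only [interpolationMap_eq_zero_prod_iff, forall_and]
  simp only [← interpolationMap_eq_zero_prod_iff]
  refine ⟨hT, ⟨fun hac ↦ ?_, fun ⟨M, f, h0, h1, _⟩ ↦ ?_⟩, fun hac α ↦ ?_⟩
  · obtain ⟨M, f, hf, hM⟩ := exists_beurling_family (hT.1 hac)
    obtain ⟨h0, h1⟩ := (hbasis f).1 hf
    exact ⟨M, f, h0, h1, fun a b _ ↦ hM a b⟩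
  · exact hT.2 fun α ↦ ⟨_, interpolationMap_sum_smul ((hbasis f).2 ⟨h0, h1⟩) α⟩
  · obtain ⟨f, hf⟩ := hT.1 hac α
    exact ⟨f, hf, fun g hg ↦ interpolationMap_injective hE hconn (hg.trans hf.symm)⟩

/-- Let `X` be a finite pointed metric space (base point `z`) and
`D = ((x i, y i))_{i∈I}` a family of edges (`x i ≠ y i`, no repeated edges) such that
the associated graph `G` on `X` is connected. TFAE: (i) `G` contains no cycle;
(ii) the interpolating operator `T : Lip₀(X) → ℓ_∞(I)` is surjective (here `Lip₀(X)`
is just the functions vanishing at `z`, every function on a finite metric space being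
Lipschitz); (iii) `D` admits a finite Beurling set of functions in `Lip₀(X)`.
Moreover, when (i) holds, `T` is a bijection. -/
theorem stmt15 {X : Type*} [MetricSpace X] [Fintype X] {I : Type*} [Fintype I]
    [DecidableEq I] (z : X) (x y : I → X) (hxy : ∀ i, x i ≠ y i)
    (hinj : ∀ i j, (x i = x j ∧ y i = y j) ∨ (x i = y j ∧ y i = x j) → i = j)
    (G : SimpleGraph X)
    (hG : ∀ a b : X, G.Adj a b ↔ ∃ i, (x i = a ∧ y i = b) ∨ (x i = b ∧ y i = a))
    (hconn : G.Connected) :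
    (G.IsAcyclic ↔ ∀ α : I → ℝ, ∃ f : X → ℝ, f z = 0 ∧
      ∀ i, (f (x i) - f (y i)) / dist (x i) (y i) = α i) ∧
    (G.IsAcyclic ↔ ∃ M : ℝ, ∃ f : I → X → ℝ, (∀ i, f i z = 0) ∧
      (∀ i j, (f i (x j) - f i (y j)) / dist (x j) (y j) = if i = j then 1 else 0) ∧
      ∀ a b : X, a ≠ b → ∑ i, |f i a - f i b| ≤ M * dist a b) ∧
    (G.IsAcyclic → ∀ α : I → ℝ, ∃! f : X → ℝ, f z = 0 ∧
      ∀ i, (f (x i) - f (y i)) / dist (x i) (y i) = α i) :=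
  stmt15_general z x y hinj G hG hconn
end

section
/- For any (x,y), (u,v) ∈ X² with x ≠ y and u ≠ v, the molecular metric satisfies ‖m_{x,y} − m_{u,v}‖ ≤ 2 (d(x,u) + d(y,v)) / max{d(x,y), d(u,v)}. Consequently, if ((x_i,y_i))_{i∈I} is a Lipschitz interpolating set for Lip_0(X) with constant M, then ‖m_{x_i,y_i} − m_{x_j,y_j}‖ ≥ 1/M for all i ≠ j. -/
/-- Key analytic estimate for the molecular metric. -/
lemma key_est {X : Type*} [MetricSpace X] (a b c d : X) (hab : a ≠ b) (hcd : c ≠ d)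
    (f : X → ℝ) (hf : ∀ p q : X, |f p - f q| ≤ dist p q) :
    (f a - f b) / dist a b - (f c - f d) / dist c d
      ≤ 2 * (dist a c + dist b d) / max (dist a b) (dist c d) := by
  have h1 : 0 < dist a b := dist_pos.2 hab
  have h2 : 0 < dist c d := dist_pos.2 hcd
  have hac := hf a c
  have hbd := hf b d
  have hab' := hf a b
  have hcd' := hf c d
  rw [abs_le] at hac hbd hab' hcd'
  have htri1 : dist a b ≤ dist a c + dist b d + dist c d := by
    have h := dist_triangle4 a c d b
    rw [dist_comm d b] at h
    linarith
  have htri2 : dist c d ≤ dist a c + dist b d + dist a b := by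
    have h := dist_triangle4 c a b d
    rw [dist_comm c a] at h
    linarith
  rcases le_total (dist c d) (dist a b) with hle | hle
  · rw [max_eq_left hle]
    have P : (f a - f b) * dist c d - (f c - f d) * dist a b
        ≤ 2 * (dist a c + dist b d) * dist c d := by
      nlinarith [mul_nonneg (by linarith : (0:ℝ) ≤ dist c d + (f c - f d))
          (by linarith : (0:ℝ) ≤ dist a b - dist c d),
        mul_nonneg h2.le
          (by linarith : (0:ℝ) ≤ dist a c + dist b d - (dist a b - dist c d)),
        mul_nonneg h2.le
          (by linarith : (0:ℝ) ≤ dist a c + dist b d - ((f a - f b) - (f c - f d)))]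
    calc (f a - f b) / dist a b - (f c - f d) / dist c d
        = ((f a - f b) * dist c d - (f c - f d) * dist a b) / (dist a b * dist c d) := by
          field_simp
      _ ≤ (2 * (dist a c + dist b d) * dist c d) / (dist a b * dist c d) :=
          (div_le_div_iff_of_pos_right (by positivity)).2 P
      _ = 2 * (dist a c + dist b d) / dist a b := by
          rw [mul_comm (2 * (dist a c + dist b d)) (dist c d),
            mul_comm (dist a b) (dist c d), mul_div_mul_left _ _ h2.ne']
  · rw [max_eq_right hle]
    have P : (f a - f b) * dist c d - (f c - f d) * dist a b
        ≤ 2 * (dist a c + dist b d) * dist a b := by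
      nlinarith [mul_nonneg (by linarith : (0:ℝ) ≤ dist a b - (f a - f b))
          (by linarith : (0:ℝ) ≤ dist c d - dist a b),
        mul_nonneg h1.le
          (by linarith : (0:ℝ) ≤ dist a c + dist b d - (dist c d - dist a b)),
        mul_nonneg h1.le
          (by linarith : (0:ℝ) ≤ dist a c + dist b d - ((f a - f b) - (f c - f d)))]
    calc (f a - f b) / dist a b - (f c - f d) / dist c d
        = ((f a - f b) * dist c d - (f c - f d) * dist a b) / (dist a b * dist c d) := by
          field_simp
      _ ≤ (2 * (dist a c + dist b d) * dist a b) / (dist a b * dist c d) :=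
          (div_le_div_iff_of_pos_right (by positivity)).2 P
      _ = 2 * (dist a c + dist b d) / dist c d := by
          rw [mul_comm (2 * (dist a c + dist b d)) (dist a b),
            mul_div_mul_left _ _ h1.ne']

/-- In the molecular metric `ρ((a,b),(c,d)) = ‖m_{a,b} − m_{c,d}‖`
(the free-space norm being expressed by duality against the unit ball of `Lip₀(X)`),
one has `ρ((a,b),(c,d)) ≤ 2 (d(a,c) + d(b,d)) / max{d(a,b), d(c,d)}` for all pairs
with `a ≠ b`, `c ≠ d`. Consequently, a Lipschitz interpolating set
`((x i, y i))_{i∈I}` for `Lip₀(X)` with interpolation constant `M` is L-molecularly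
`1/M`-separated: `‖m_{x i, y i} − m_{x j, y j}‖ ≥ 1/M` for `i ≠ j`. -/
theorem stmt16 {X : Type*} [MetricSpace X] {I : Type*} (z : X) (x y : I → X)
    (hxy : ∀ i, x i ≠ y i) (M : ℝ) (hM : 1 ≤ M)
    (hinterp : ∀ α : I → ℝ, (∀ i, |α i| ≤ 1) → ∀ K : ℝ, M < K →
      ∃ f : X → ℝ, f z = 0 ∧ (∀ a b : X, |f a - f b| ≤ K * dist a b) ∧
        ∀ i, (f (x i) - f (y i)) / dist (x i) (y i) = α i) :
    let ρ : X → X → X → X → ℝ := fun a b c d =>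
      sSup {r : ℝ | ∃ f : X → ℝ, f z = 0 ∧ (∀ p q : X, |f p - f q| ≤ dist p q) ∧
        r = (f a - f b) / dist a b - (f c - f d) / dist c d}
    (∀ a b c d : X, a ≠ b → c ≠ d →
      ρ a b c d ≤ 2 * (dist a c + dist b d) / max (dist a b) (dist c d)) ∧
    ∀ i j, i ≠ j → 1 / M ≤ ρ (x i) (y i) (x j) (y j) := by
  intro ρ
  have hρ : ρ = fun a b c d =>
      sSup {r : ℝ | ∃ f : X → ℝ, f z = 0 ∧ (∀ p q : X, |f p - f q| ≤ dist p q) ∧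
        r = (f a - f b) / dist a b - (f c - f d) / dist c d} := rfl
  have hM0 : (0:ℝ) < M := lt_of_lt_of_le one_pos hM
  constructor
  · intro a b c d hab hcd
    rw [hρ]
    apply Real.sSup_le
    · rintro r ⟨f, hfz, hf, rfl⟩
      exact key_est a b c d hab hcd f hf
    · apply div_nonneg (by positivity)
      exact le_trans dist_nonneg (le_max_left _ _)
  · intro i j hij
    rw [hρ]
    set S : Set ℝ := {r : ℝ | ∃ f : X → ℝ, f z = 0 ∧ (∀ p q : X, |f p - f q| ≤ dist p q) ∧
        r = (f (x i) - f (y i)) / dist (x i) (y i) - (f (x j) - f (y j)) / dist (x j) (y j)}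
      with hS
    have hdi : 0 < dist (x i) (y i) := dist_pos.2 (hxy i)
    have hdj : 0 < dist (x j) (y j) := dist_pos.2 (hxy j)
    have hbdd : BddAbove S := by
      refine ⟨2, ?_⟩
      rintro r ⟨f, hfz, hf, rfl⟩
      have h1 : |f (x i) - f (y i)| ≤ dist (x i) (y i) := hf _ _
      have h2 : |f (x j) - f (y j)| ≤ dist (x j) (y j) := hf _ _
      rw [abs_le] at h1 h2
      have e1 : (f (x i) - f (y i)) / dist (x i) (y i) ≤ 1 := by
        rw [div_le_one hdi]; exact h1.2
      have e2 : -1 ≤ (f (x j) - f (y j)) / dist (x j) (y j) := by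
        rw [le_div_iff₀ hdj]; linarith
      linarith
    classical
    have hK : ∀ K : ℝ, M < K → 1 / K ≤ sSup S := by
      intro K hMK
      have hK0 : (0:ℝ) < K := lt_trans hM0 hMK
      obtain ⟨f, hfz, hlip, hα⟩ := hinterp (fun k => if k = i then (1:ℝ) else 0)
        (fun k => by by_cases h : k = i <;> simp [h]) K hMK
      apply le_csSup hbdd
      refine ⟨fun p => f p / K, by simp [hfz], ?_, ?_⟩
      · intro p q
        show |f p / K - f q / K| ≤ dist p q
        rw [div_sub_div_same, abs_div, abs_of_pos hK0, div_le_iff₀ hK0, mul_comm]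
        exact hlip p q
      · have e : ∀ k : I, (f (x k) / K - f (y k) / K) / dist (x k) (y k)
            = (if k = i then (1:ℝ) else 0) / K := by
          intro k
          rw [div_sub_div_same, div_right_comm, hα k]
        show (1:ℝ) / K = (f (x i) / K - f (y i) / K) / dist (x i) (y i)
            - (f (x j) / K - f (y j) / K) / dist (x j) (y j)
        rw [e i, e j, if_pos rfl, if_neg hij.symm]
        simp
    by_contra h
    push_neg at h
    rcases lt_or_ge 0 (sSup S) with hpos | hnp
    · have hM' : M < 1 / sSup S := by
        have := one_div_lt_one_div_of_lt hpos h
        rwa [one_div_one_div] at this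
      obtain ⟨K, hK1, hK2⟩ := exists_between hM'
      have hKpos : 0 < K := lt_trans hM0 hK1
      have : sSup S < 1 / K := by
        have := one_div_lt_one_div_of_lt hKpos hK2
        rwa [one_div_one_div] at this
      linarith [hK K hK1]
    · have := hK (M + 1) (by linarith)
      have : (0:ℝ) < 1 / (M + 1) := by positivity
      linarith [hK (M + 1) (by linarith)]
end
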